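/- arXiv:2401.04894 — 2 statements merged into one kernel-verified Lean document; each statement's English description precedes it below -/
import Mathlib

section
/- Let r and k be integers with 1 ≤ r < k. Then ex(n, S_r, K_{k+1}) = (1 + o(1)) · N(S_r, T(n, k)) as n → ∞; that is, the ratio ex(n, S_r, K_{k+1}) / N(S_r, T(n, k)) tends to 1 as n tends to infinity. -/
open Finset

/-- Build a simple graph from an arbitrary relation by symmetrizing it and
removing loops. -/
def mkGraph {V : Type*} (r : V → V → Prop) : SimpleGraph V where
  Adj v w := v ≠ w ∧ (r v w ∨ r w v)
  symm := ⟨fun _ _ h => ⟨h.1.symm, h.2.symm⟩⟩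
  loopless := ⟨fun _ h => h.1 rfl⟩

/-- `G` contains a copy of `F` as a (not necessarily induced) subgraph. -/
def Contains {α β : Type*} (F : SimpleGraph α) (G : SimpleGraph β) : Prop :=
  ∃ f : α ↪ β, ∀ a b, F.Adj a b → G.Adj (f a) (f b)

/-- `e_r(G)`, the sum of the `r`-th powers of the degrees of `G`. -/
noncomputable def degPow {β : Type*} [Fintype β] (G : SimpleGraph β) (r : ℕ) : ℕ :=
  ∑ v, ((G.neighborSet v).ncard) ^ r

/-- `N(S_p, G) = ∑_v C(d(v), p)`, the number of copies of the star `S_p` in `G`. -/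
noncomputable def starCount {β : Type*} [Fintype β] (G : SimpleGraph β) (p : ℕ) : ℕ :=
  ∑ v, ((G.neighborSet v).ncard).choose p

/-- The number of edges of `G`. -/
noncomputable def edgeCount {β : Type*} (G : SimpleGraph β) : ℕ :=
  G.edgeSet.ncard

/-- `ex_r(n, F)`: the largest value of `e_r(G)` over `F`-free graphs `G` on `n` vertices. -/
noncomputable def exDegPow {α : Type*} (n r : ℕ) (F : SimpleGraph α) : ℕ :=
  sSup {m | ∃ G : SimpleGraph (Fin n), ¬ Contains F G ∧ degPow G r = m}

/-- `ex(n, S_p, F)`: the largest number of copies of the star `S_p` in an `F`-free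
graph on `n` vertices. -/
noncomputable def exStarCount {α : Type*} (n p : ℕ) (F : SimpleGraph α) : ℕ :=
  sSup {m | ∃ G : SimpleGraph (Fin n), ¬ Contains F G ∧ starCount G p = m}

open SimpleGraph Filter Topology

/-! Erdős' degree majorization: a `K_{k+1}`-free graph on `n` vertices has a partition into `k`
parts of sizes `s_i` such that `deg v ≤ n - s_i` for every `v` in part `i` (induct on the
neighbourhood of a vertex of maximum degree). Hence
`r! N(S_r, G) ≤ ∑_v (deg v)^r ≤ ∑_i s_i (n - s_i)^r`, and since for `r < k` the function
`x ↦ x (n - x)^r` lies below its tangent at `n / k` on `[0, n]`, this is at most `n (n - n/k)^r`.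
In `T(n, k)` every degree is at least `n - n/k - 1`, so `r! N(S_r, T(n, k)) ≥ n (n - n/k - r)^r`,
and the ratio is squeezed between `1` and `((n - n/k) / (n - n/k - r))^r → 1`. -/

theorem le_tangent_of_hasDerivAt {f f' : ℝ → ℝ} {a b c x : ℝ}
    (hf : ∀ y, HasDerivAt f (f' y) y) (hleft : ∀ y ∈ Set.Icc a c, f' c ≤ f' y)
    (hright : ∀ y ∈ Set.Icc c b, f' y ≤ f' c) (hx : x ∈ Set.Icc a b) :
    f x ≤ f c + f' c * (x - c) := by
  have hdiff : Differentiable ℝ f := fun y => (hf y).differentiableAt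
  rcases le_total x c with hxc | hcx
  · have := (convex_Icc a c).mul_sub_le_image_sub_of_le_deriv hdiff.continuous.continuousOn
      hdiff.differentiableOn (C := f' c)
      (fun y hy => (hf y).deriv ▸ hleft y (interior_subset hy))
      x ⟨hx.1, hxc⟩ c ⟨hx.1.trans hxc, le_rfl⟩ hxc
    linarith
  · have := (convex_Icc c b).image_sub_le_mul_sub_of_deriv_le hdiff.continuous.continuousOn
      hdiff.differentiableOn (C := f' c)
      (fun y hy => (hf y).deriv ▸ hright y (interior_subset hy))
      c ⟨le_rfl, hcx.trans hx.2⟩ x ⟨hcx, hx.2⟩ hcx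
    linarith

/-- The right-hand side is the tangent line at `c` of the left-hand side. -/
theorem mul_sub_pow_le_tangent (m : ℕ) {N c x : ℝ} (hc : 0 ≤ c) (hcN : (m + 2) * c ≤ N)
    (hx₀ : 0 ≤ x) (hxN : x ≤ N) :
    x * (N - x) ^ (m + 1) ≤ (N - c) ^ m * ((m + 1) * c ^ 2 + x * (N - (m + 2) * c)) := by
  have hNc : 0 ≤ N - c := by nlinarith
  have hderiv : ∀ y, HasDerivAt (fun x => x * (N - x) ^ (m + 1))
      ((N - y) ^ m * (N - (m + 2) * y)) y := fun y => by
    refine ((hasDerivAt_id' y).mul (((hasDerivAt_id' y).const_sub N).pow (m + 1))).congr_deriv ?_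
    rw [Nat.add_sub_cancel, Pi.pow_apply, pow_succ]
    push_cast
    ring
  have := le_tangent_of_hasDerivAt (a := 0) (b := N) (c := c) hderiv
    (fun y ⟨hy₀, hyc⟩ => mul_le_mul (pow_le_pow_left₀ hNc (by linarith) m) (by nlinarith)
      (by nlinarith) (pow_nonneg (by linarith) m))
    (fun y ⟨hcy, hyN⟩ => by
      rcases le_or_gt (N - (m + 2) * y) 0 with h | h
      · exact (mul_nonpos_of_nonneg_of_nonpos (pow_nonneg (by linarith) m) h).trans
          (mul_nonneg (pow_nonneg hNc m) (by linarith))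
      · exact mul_le_mul (pow_le_pow_left₀ (by linarith) (by linarith) m) (by nlinarith) h.le
          (pow_nonneg hNc m))
    ⟨hx₀, hxN⟩
  linear_combination this

theorem sum_mul_sub_pow_le {ι : Type*} (s : Finset ι) (m : ℕ) (hs : m + 2 ≤ #s) {x : ι → ℝ}
    {N : ℝ} (hx₀ : ∀ i ∈ s, 0 ≤ x i) (hN : ∑ i ∈ s, x i = N) :
    ∑ i ∈ s, x i * (N - x i) ^ (m + 1) ≤ N * (N - N / #s) ^ (m + 1) := by
  set c := N / #s
  have hs₀ : (0 : ℝ) < #s := by norm_cast; omega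
  have hN₀ : 0 ≤ N := hN ▸ sum_nonneg hx₀
  have hcs : c * #s = N := div_mul_cancel₀ N hs₀.ne'
  have hcN : (m + 2) * c ≤ N := by
    rw [← hcs, mul_comm]
    exact mul_le_mul_of_nonneg_left (by exact_mod_cast hs) (div_nonneg hN₀ hs₀.le)
  calc ∑ i ∈ s, x i * (N - x i) ^ (m + 1)
      ≤ ∑ i ∈ s, (N - c) ^ m * ((m + 1) * c ^ 2 + x i * (N - (m + 2) * c)) :=
        sum_le_sum fun i hi => mul_sub_pow_le_tangent m (div_nonneg hN₀ hs₀.le) hcN (hx₀ i hi)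
          (hN ▸ single_le_sum hx₀ hi)
    _ = (N - c) ^ m * (#s * c * ((m + 1) * c) + N * (N - (m + 2) * c)) := by
        rw [← mul_sum, sum_add_distrib, sum_const, ← sum_mul, nsmul_eq_mul, hN]
        ring
    _ = N * (N - c) ^ (m + 1) := by
        rw [mul_comm (#s : ℝ), hcs]
        ring

theorem contains_iff_isContained {α β : Type*} {F : SimpleGraph α} {G : SimpleGraph β} :
    Contains F G ↔ F ⊑ G :=
  ⟨fun ⟨f, hf⟩ => ⟨⟨⟨f, hf _ _⟩, f.injective⟩⟩,
    fun ⟨c⟩ => ⟨⟨c, c.injective⟩, fun _ _ => c.toHom.map_adj⟩⟩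

theorem not_contains_completeGraph_iff {β : Type*} {G : SimpleGraph β} {m : ℕ} :
    ¬ Contains (completeGraph (Fin m)) G ↔ G.CliqueFree m := by
  rw [contains_iff_isContained, ← not_cliqueFree_iff_top_isContained, not_not]

theorem ncard_neighborSet_eq_card_filter {V : Type*} [Fintype V] (G : SimpleGraph V)
    [DecidableRel G.Adj] (v : V) : (G.neighborSet v).ncard = #{u | G.Adj v u} := by
  rw [Set.ncard_eq_toFinset_card', ← neighborFinset_def, neighborFinset_eq_filter]

theorem factorial_mul_starCount_le_degPow {V : Type*} [Fintype V] (G : SimpleGraph V) (r : ℕ) :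
    r.factorial * starCount G r ≤ degPow G r := by
  rw [starCount, degPow, mul_sum]
  exact sum_le_sum fun v _ =>
    (Nat.descFactorial_eq_factorial_mul_choose _ _).symm.trans_le (Nat.descFactorial_le_pow _ _)

theorem exists_partition_card_filter_adj_add_card_part_le {V : Type*} [DecidableEq V]
    (G : SimpleGraph V) [DecidableRel G.Adj] (k : ℕ) (s : Finset V)
    (hs : ∀ t ⊆ s, ¬ G.IsNClique (k + 1) t) :
    ∃ P : V → ℕ, ∀ v ∈ s, P v < k ∧ #{u ∈ s | G.Adj v u} + #{u ∈ s | P u = P v} ≤ #s := by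
  induction k generalizing s with
  | zero =>
    obtain rfl : s = ∅ := eq_empty_of_forall_notMem fun v hv =>
      hs {v} (singleton_subset_iff.2 hv) (isNClique_one.2 ⟨v, rfl⟩)
    exact ⟨0, by simp⟩
  | succ k ih =>
    obtain rfl | hne := s.eq_empty_or_nonempty
    · exact ⟨0, by simp⟩
    obtain ⟨w, hw, hmax⟩ := exists_max_image s (fun v => #{u ∈ s | G.Adj v u}) hne
    set t := {u ∈ s | G.Adj w u}
    have hts : t ⊆ s := filter_subset _ _
    obtain ⟨P, hP⟩ := ih t fun c hct hc => hs (insert w c) (insert_subset hw (hct.trans hts))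
      (hc.insert fun b hb => (mem_filter.1 (hct hb)).2)
    set Q : V → ℕ := fun v => if v ∈ t then P v + 1 else 0 with hQ
    refine ⟨Q, fun v hv => ?_⟩
    have hcard : #(s \ t) + #t = #s := card_sdiff_add_card_eq_card hts
    by_cases hvt : v ∈ t
    · have hpart : {u ∈ s | Q u = Q v} = {u ∈ t | P u = P v} := by
        ext u
        by_cases hut : u ∈ t
        · simp [hQ, hut, hvt, hts hut]
        · simp [hQ, hut, hvt]
      have hdeg : #{u ∈ s | G.Adj v u} ≤ #{u ∈ t | G.Adj v u} + #(s \ t) := by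
        refine (card_le_card fun u hu => ?_).trans (card_union_le _ _)
        rw [mem_filter] at hu
        by_cases hut : u ∈ t
        · exact mem_union_left _ (mem_filter.2 ⟨hut, hu.2⟩)
        · exact mem_union_right _ (Finset.mem_sdiff.2 ⟨hu.1, hut⟩)
      have := hP v hvt
      rw [hpart, hQ]
      exact ⟨by simp only [hvt, if_true]; omega, by omega⟩
    · have hpart : {u ∈ s | Q u = Q v} = s \ t := by
        ext u
        by_cases hut : u ∈ t <;> simp [hQ, hut, hvt]
      rw [hpart, hQ]
      exact ⟨by simp only [hvt, if_false]; omega, by have := hmax v hv; omega⟩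

theorem SimpleGraph.CliqueFree.degPow_le {V : Type*} [Fintype V] {G : SimpleGraph V} {k r : ℕ}
    (hG : G.CliqueFree (k + 1)) (hr : 0 < r) (hrk : r < k) :
    (degPow G r : ℝ) ≤ Fintype.card V * (Fintype.card V - Fintype.card V / k) ^ r := by
  classical
  obtain ⟨m, rfl⟩ := Nat.exists_eq_add_of_lt hr
  obtain ⟨P, hP⟩ := exists_partition_card_filter_adj_add_card_part_le G k univ fun t _ => hG t
  set n := Fintype.card V
  set part : ℕ → ℕ := fun i => #{u | P u = i}
  have hP_mem : ∀ v ∈ (univ : Finset V), P v ∈ range k := fun v hv => mem_range.2 (hP v hv).1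
  have hsum : ∑ i ∈ range k, (part i : ℝ) = n := by
    rw [← Nat.cast_sum, ← card_eq_sum_card_fiberwise hP_mem, card_univ]
  have hdeg : ∀ v, ((G.neighborSet v).ncard : ℝ) ≤ n - part (P v) := fun v => by
    rw [le_sub_iff_add_le, ncard_neighborSet_eq_card_filter]
    exact_mod_cast (hP v (mem_univ v)).2
  calc (degPow G (0 + m + 1) : ℝ)
      = ∑ v, ((G.neighborSet v).ncard : ℝ) ^ (m + 1) := by simp [degPow]
    _ ≤ ∑ v, ((n : ℝ) - part (P v)) ^ (m + 1) :=
        sum_le_sum fun v _ => pow_le_pow_left₀ (Nat.cast_nonneg _) (hdeg v) _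
    _ = ∑ i ∈ range k, ∑ v with P v = i, ((n : ℝ) - part i) ^ (m + 1) := by
        rw [← sum_fiberwise_of_maps_to hP_mem]
        exact sum_congr rfl fun i _ => sum_congr rfl fun v hv => by rw [(mem_filter.1 hv).2]
    _ = ∑ i ∈ range k, (part i : ℝ) * (n - part i) ^ (m + 1) := by
        simp only [sum_const, nsmul_eq_mul, part]
    _ ≤ n * (n - n / k) ^ (0 + m + 1) := by
        simpa using sum_mul_sub_pow_le (range k) m (by rw [card_range]; omega)
          (fun i _ => Nat.cast_nonneg (part i)) hsum

theorem card_not_adj_turanGraph_le {n k : ℕ} (hk : 0 < k) (v : Fin n) :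
    #{w | ¬ (turanGraph n k).Adj v w} ≤ n / k + 1 := by
  have : #{w | ¬ (turanGraph n k).Adj v w} = n.count (· ≡ v [MOD k]) := by
    rw [Nat.count_eq_card_filter_range, ← Nat.Iio_eq_range, ← Fin.map_valEmbedding_univ,
      filter_map, card_map]
    simp [turanGraph_adj, Nat.ModEq, eq_comm]
  rw [this, Nat.count_modEq_card n hk]
  split_ifs <;> omega

theorem le_ncard_neighborSet_turanGraph {n k : ℕ} (hk : 0 < k) (v : Fin n) :
    n ≤ ((turanGraph n k).neighborSet v).ncard + (n / k + 1) := by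
  rw [ncard_neighborSet_eq_card_filter]
  have hsplit := card_filter_add_card_filter_not (s := univ) fun w => (turanGraph n k).Adj v w
  rw [card_univ, Fintype.card_fin] at hsplit
  have := card_not_adj_turanGraph_le hk v
  omega

theorem mul_pow_le_factorial_mul_starCount_turanGraph {n k r : ℕ} (hk : 0 < k)
    (hr : (r : ℝ) ≤ n - n / k) :
    (n : ℝ) * (n - n / k - r) ^ r ≤ r.factorial * starCount (turanGraph n k) r := by
  have hvertex : ∀ v : Fin n, ((n : ℝ) - n / k - r) ^ r ≤
      r.factorial * ((turanGraph n k).neighborSet v).ncard.choose r := fun v => by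
    set d := ((turanGraph n k).neighborSet v).ncard
    have hd : (n : ℝ) ≤ d + (n / k : ℕ) + 1 := by
      exact_mod_cast le_ncard_neighborSet_turanGraph hk v
    have hnk : ((n / k : ℕ) : ℝ) ≤ n / k := Nat.cast_div_le
    have hrd : r ≤ d + 1 := by exact_mod_cast (show (r : ℝ) ≤ d + 1 by linarith)
    calc ((n : ℝ) - n / k - r) ^ r ≤ ((d + 1 - r : ℕ) : ℝ) ^ r := by
          rw [Nat.cast_sub hrd]
          push_cast
          exact pow_le_pow_left₀ (by linarith) (by linarith) r
      _ ≤ r.factorial * d.choose r := by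
          rw [← Nat.cast_pow, ← Nat.cast_mul, ← Nat.descFactorial_eq_factorial_mul_choose]
          exact_mod_cast Nat.pow_sub_le_descFactorial d r
  calc (n : ℝ) * (n - n / k - r) ^ r = ∑ _v : Fin n, ((n : ℝ) - n / k - r) ^ r := by simp
    _ ≤ _ := by
      rw [starCount, Nat.cast_sum, mul_sum]
      exact sum_le_sum fun v _ => by exact_mod_cast hvertex v

theorem bddAbove_starCount_free {α : Type*} (F : SimpleGraph α) (n p : ℕ) :
    BddAbove {m | ∃ G : SimpleGraph (Fin n), ¬ Contains F G ∧ starCount G p = m} := by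
  refine ((Set.finite_range fun G : SimpleGraph (Fin n) => starCount G p).subset ?_).bddAbove
  rintro _ ⟨G, -, rfl⟩
  exact ⟨G, rfl⟩

theorem starCount_le_exStarCount {α : Type*} {F : SimpleGraph α} {n p : ℕ}
    {G : SimpleGraph (Fin n)} (hG : ¬ Contains F G) : starCount G p ≤ exStarCount n p F :=
  le_csSup (bddAbove_starCount_free F n p) ⟨G, hG, rfl⟩

theorem exists_starCount_eq_exStarCount {α : Type*} {F : SimpleGraph α} {n p : ℕ}
    {G : SimpleGraph (Fin n)} (hG : ¬ Contains F G) :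
    ∃ G : SimpleGraph (Fin n), ¬ Contains F G ∧ starCount G p = exStarCount n p F := by
  refine Nat.sSup_mem ?_ (bddAbove_starCount_free F n p)
  exact ⟨_, G, hG, rfl⟩

theorem tendsto_div_sub_pow_atTop {a : ℕ → ℝ} (ha : Tendsto a atTop atTop) (c : ℝ) (r : ℕ) :
    Tendsto (fun n => (a n / (a n - c)) ^ r) atTop (𝓝 1) := by
  have h : Tendsto (fun n => (1 - c / a n)⁻¹) atTop (𝓝 1) := by
    simpa using ((tendsto_const_nhds.div_atTop ha).const_sub 1).inv₀
      (by norm_num : (1 : ℝ) - 0 ≠ 0)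
  have h' : (fun n => (1 - c / a n)⁻¹) =ᶠ[atTop] fun n => a n / (a n - c) := by
    filter_upwards [ha.eventually_gt_atTop 0] with n hn
    field_simp
  simpa using (h.congr' h').pow r

theorem exStarCount_div_starCount_turanGraph_mem_Icc {n k r : ℕ} (hr : 0 < r) (hrk : r < k)
    (hn : (r : ℝ) < n - n / k) :
    (exStarCount n r (completeGraph (Fin (k + 1))) : ℝ) / starCount (turanGraph n k) r ∈
      Set.Icc 1 (((n - n / k : ℝ) / (n - n / k - r)) ^ r) := by
  have hk : 0 < k := hr.trans hrk
  set A : ℝ := n - n / k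
  set E := exStarCount n r (completeGraph (Fin (k + 1)))
  set T := starCount (turanGraph n k) r
  have hfree : ¬ Contains (completeGraph (Fin (k + 1))) (turanGraph n k) :=
    not_contains_completeGraph_iff.2 (turanGraph_cliqueFree hk)
  have hTE : (T : ℝ) ≤ E := by exact_mod_cast starCount_le_exStarCount hfree
  have hE : r.factorial * (E : ℝ) ≤ n * A ^ r := by
    obtain ⟨G, hG, hGE⟩ := exists_starCount_eq_exStarCount (p := r) hfree
    rw [show E = starCount G r from hGE.symm]
    calc _ ≤ (degPow G r : ℝ) := by exact_mod_cast factorial_mul_starCount_le_degPow G r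
      _ ≤ _ := by simpa using (not_contains_completeGraph_iff.1 hG).degPow_le hr hrk
  have hT : (n : ℝ) * (A - r) ^ r ≤ r.factorial * T :=
    mul_pow_le_factorial_mul_starCount_turanGraph hk hn.le
  have hr₀ : (0 : ℝ) < r := by exact_mod_cast hr
  have hAr : 0 < A - r := sub_pos.2 hn
  have hn₀ : (0 : ℝ) < n := by
    have : (0 : ℝ) ≤ n / k := by positivity
    linarith
  have hT₀ : (0 : ℝ) < T :=
    pos_of_mul_pos_right ((mul_pos hn₀ (pow_pos hAr r)).trans_le hT) (Nat.cast_nonneg _)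
  refine ⟨(one_le_div hT₀).2 hTE, ?_⟩
  rw [div_le_iff₀ hT₀, div_pow, div_mul_eq_mul_div, le_div_iff₀ (pow_pos hAr r)]
  refine le_of_mul_le_mul_left ?_ (Nat.cast_pos.2 r.factorial_pos : (0 : ℝ) < r.factorial)
  calc (r.factorial : ℝ) * (E * (A - r) ^ r) = r.factorial * E * (A - r) ^ r := by ring
    _ ≤ n * A ^ r * (A - r) ^ r := by gcongr
    _ = A ^ r * (n * (A - r) ^ r) := by ring
    _ ≤ A ^ r * (r.factorial * T) := mul_le_mul_of_nonneg_left hT (pow_nonneg (by linarith) r)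
    _ = r.factorial * (A ^ r * T) := by ring

/-- For `1 ≤ r < k`,
`ex(n, S_r, K_{k+1}) = (1 + o(1)) · N(S_r, T(n,k))` as `n → ∞`. -/
theorem stmt_2 (r k : ℕ) (hr : 1 ≤ r) (hrk : r < k) :
    Filter.Tendsto
      (fun n : ℕ => (exStarCount n r (SimpleGraph.completeGraph (Fin (k + 1))) : ℝ) /
        (starCount (SimpleGraph.turanGraph n k) r : ℝ))
      Filter.atTop (nhds 1) := by
  have hA : Tendsto (fun n : ℕ => (n : ℝ) - n / k) atTop atTop := by
    have hk : (1 : ℝ) < k := by exact_mod_cast hr.trans_lt hrk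
    have : (0 : ℝ) < 1 - 1 / k := by
      rw [sub_pos, div_lt_one (by linarith)]
      exact hk
    simpa [mul_sub, div_eq_mul_inv] using tendsto_natCast_atTop_atTop.atTop_mul_const this
  have hbounds := (hA.eventually_gt_atTop (r : ℝ)).mono fun n hn =>
    exStarCount_div_starCount_turanGraph_mem_Icc hr hrk hn
  exact tendsto_of_tendsto_of_tendsto_of_le_of_le' tendsto_const_nhds
    (tendsto_div_sub_pow_atTop hA r r) (hbounds.mono fun _ h => h.1)
    (hbounds.mono fun _ h => h.2)
end

section
/- Let r ≥ 3 be an integer. There exists n_0 such that for all n ≥ n_0, ex_r(n, C_4) = e_r(F_n). -/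
open Finset

/-- The friendship graph `F_n` on `n` vertices: vertex `0` is adjacent to all other
vertices, and the remaining `n − 1` vertices carry the maximum matching
`{1,2}, {3,4}, …` with `⌊(n−1)/2⌋` edges. -/
def friendshipGraph (n : ℕ) : SimpleGraph (Fin n) :=
  mkGraph (fun v w => v.val = 0 ∨ (v.val % 2 = 1 ∧ w.val = v.val + 1))

/-!
In a `C₄`-free graph two distinct vertices have at most one common neighbour. Double counting
paths of length two then gives `∑ d(v)² ≤ n(n-1) + ∑ d(v)`, and every vertex `v ≠ u` has at
most `n - d(u) + 1` neighbours.

If some vertex `u` is adjacent to all others, every other vertex has degree `1` or `2`, so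
`e_r(G)` is an increasing function of the degree sum, which is even and at most `3(n-1)`;
the degree sum of `F_n` is the largest even number `≤ 3(n-1)`.

Otherwise let `D < n - 1` be the maximum degree. If `2D ≤ n - 1`, then
`e_r(G) ≤ D^(r-2) ∑ d(v)²` is already below `(n-1)^r`. If `2D > n - 1`, all vertices other than
a vertex `u` of maximum degree have degree at most `n - D + 1`, the same double counting bounds
their `∑ d(v)²` by `2(n-1)(n-D+1)`, and again `e_r(G) < (n-1)^r`, which is at most the
contribution of the centre of `F_n`.
-/

open SimpleGraph

theorem contains_cycleGraph_four_iff {V : Type*} (G : SimpleGraph V) :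
    Contains (cycleGraph 4) G ↔
      ∃ x y z w, x ≠ y ∧ z ≠ w ∧ G.Adj x z ∧ G.Adj x w ∧ G.Adj y z ∧ G.Adj y w := by
  constructor
  · rintro ⟨f, hf⟩
    exact ⟨f 0, f 2, f 1, f 3, f.injective.ne (by decide), f.injective.ne (by decide),
      hf 0 1 (by decide), hf 0 3 (by decide), hf 2 1 (by decide), hf 2 3 (by decide)⟩
  · rintro ⟨x, y, z, w, hxy, hzw, hxz, hxw, hyz, hyw⟩
    refine ⟨⟨![x, z, y, w], ?_⟩, ?_⟩
    · intro a b hab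
      fin_cases a <;> fin_cases b <;>
        simp_all [hxz.ne, hxw.ne, hyz.ne, hyw.ne, hxz.ne', hxw.ne', hyz.ne', hyw.ne', eq_comm]
    · intro a b hab
      fin_cases a <;> fin_cases b <;>
        first
          | exact absurd hab (by decide)
          | assumption
          | exact (G.adj_comm _ _).mp ‹_›

theorem Finset.sum_pow_le_pow_sub_two_mul_sum_sq {ι : Type*} (s : Finset ι) (f : ι → ℕ)
    {B r : ℕ} (hr : 2 ≤ r) (hf : ∀ i ∈ s, f i ≤ B) :
    ∑ i ∈ s, f i ^ r ≤ B ^ (r - 2) * ∑ i ∈ s, f i ^ 2 := by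
  rw [mul_sum]
  refine sum_le_sum fun i hi => ?_
  calc f i ^ r = f i ^ (r - 2) * f i ^ 2 := by rw [← pow_add, Nat.sub_add_cancel hr]
    _ ≤ B ^ (r - 2) * f i ^ 2 := by gcongr; exact hf i hi

theorem pow_sub_two_mul_lt_pow {m D r : ℕ} (hm : 4 ≤ m) (hD : 2 * D ≤ m) (hr : 3 ≤ r) :
    D ^ (r - 2) * ((m + 1) * m + (m + 1) * D) < m ^ r := by
  obtain ⟨k, rfl⟩ := Nat.exists_eq_add_of_le' hr
  have h4 : 4 ≤ 2 ^ (k + 2) := by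
    calc 4 = 2 ^ 2 := rfl
      _ ≤ 2 ^ (k + 2) := Nat.pow_le_pow_right (by norm_num) (by omega)
  rw [show k + 3 - 2 = k + 1 by omega]
  refine Nat.lt_of_mul_lt_mul_left (a := 2 ^ (k + 2)) ?_
  calc 2 ^ (k + 2) * (D ^ (k + 1) * ((m + 1) * m + (m + 1) * D))
      = (2 * D) ^ (k + 1) * ((m + 1) * (2 * m + 2 * D)) := by ring
    _ ≤ m ^ (k + 1) * ((m + 1) * (3 * m)) := by gcongr; omega
    _ < m ^ (k + 1) * (4 * m * m) := Nat.mul_lt_mul_of_pos_left (by nlinarith) (by positivity)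
    _ = 4 * m ^ (k + 3) := by ring
    _ ≤ 2 ^ (k + 2) * m ^ (k + 3) := by gcongr

theorem pow_three_add_two_mul_sq_lt_pow_three {D t : ℕ} (htD : t < D) (ht : 1 ≤ t)
    (hm : 13 ≤ D + t) : D ^ 3 + 2 * (D + t) * (t + 2) ^ 2 < (D + t) ^ 3 := by
  nlinarith [Nat.mul_le_mul htD.le htD.le, Nat.mul_le_mul hm ht,
    Nat.mul_le_mul (Nat.mul_le_mul hm ht) htD.le]

theorem pow_add_pow_sub_two_mul_lt_pow {D t r : ℕ} (htD : t < D) (ht : 1 ≤ t)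
    (hm : 13 ≤ D + t) (hr : 3 ≤ r) :
    D ^ r + (t + 2) ^ (r - 2) * (2 * (D + t) * (t + 2)) < (D + t) ^ r := by
  obtain ⟨k, rfl⟩ := Nat.exists_eq_add_of_le' hr
  have hD : D ^ k ≤ (D + t) ^ k := Nat.pow_le_pow_left (by omega) k
  have ht2 : (t + 2) ^ k ≤ (D + t) ^ k := Nat.pow_le_pow_left (by omega) k
  calc D ^ (k + 3) + (t + 2) ^ (k + 3 - 2) * (2 * (D + t) * (t + 2))
      = D ^ 3 * D ^ k + 2 * (D + t) * (t + 2) ^ 2 * (t + 2) ^ k := by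
        rw [show k + 3 - 2 = k + 1 by omega]; ring
    _ ≤ D ^ 3 * (D + t) ^ k + 2 * (D + t) * (t + 2) ^ 2 * (D + t) ^ k := by gcongr
    _ < (D + t) ^ 3 * (D + t) ^ k := by
        rw [← add_mul]
        exact Nat.mul_lt_mul_of_pos_right (pow_three_add_two_mul_sq_lt_pow_three htD ht hm)
          (by positivity)
    _ = (D + t) ^ (k + 3) := by ring

namespace SimpleGraph

variable {V : Type*} [Fintype V] {G : SimpleGraph V} [DecidableRel G.Adj]

theorem sum_sq_degree_eq_sum_sum_degree_neighborFinset :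
    ∑ v, G.degree v ^ 2 = ∑ v, ∑ w ∈ G.neighborFinset v, G.degree w := by
  calc ∑ v, G.degree v ^ 2 = ∑ v, ∑ w ∈ G.neighborFinset v, G.degree v := by
        simp [sq]
    _ = ∑ w, ∑ v ∈ G.neighborFinset w, G.degree v := by
        simp only [neighborFinset_eq_filter, sum_filter]
        rw [sum_comm]
        simp only [adj_comm]

variable [DecidableEq V]

theorem sum_degree_neighborFinset_eq (u : V) :
    ∑ w ∈ G.neighborFinset u, G.degree w =
      ∑ x, #(G.neighborFinset u ∩ G.neighborFinset x) := by
  convert sum_card_bipartiteAbove_eq_sum_card_bipartiteBelow G.Adj (s := G.neighborFinset u)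
    (t := univ) using 3 with w _ x
  · rw [bipartiteAbove, ← card_neighborFinset_eq_degree, neighborFinset_eq_filter]
  · ext y
    simp [bipartiteBelow, adj_comm]

section CycleFour

variable (hG : ¬ Contains (cycleGraph 4) G)
include hG

theorem card_neighborFinset_inter_le_one {x y : V} (hxy : x ≠ y) :
    #(G.neighborFinset x ∩ G.neighborFinset y) ≤ 1 := by
  refine Finset.card_le_one.mpr fun z hz w hw => ?_
  by_contra hzw
  simp only [mem_inter, mem_neighborFinset] at hz hw
  exact hG ((contains_cycleGraph_four_iff G).mpr ⟨x, y, z, w, hxy, hzw, hz.1, hw.1, hz.2, hw.2⟩)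

theorem sum_degree_neighborFinset_le (u : V) :
    ∑ w ∈ G.neighborFinset u, G.degree w ≤ G.degree u + (Fintype.card V - 1) := by
  rw [sum_degree_neighborFinset_eq, ← add_sum_erase _ _ (mem_univ u), inter_self,
    card_neighborFinset_eq_degree]
  gcongr
  calc ∑ x ∈ univ.erase u, #(G.neighborFinset u ∩ G.neighborFinset x)
      ≤ ∑ _x ∈ univ.erase u, 1 :=
        sum_le_sum fun x hx => card_neighborFinset_inter_le_one hG (ne_of_mem_erase hx).symm
    _ = Fintype.card V - 1 := by simp [card_erase_of_mem]

theorem sum_sq_degree_le :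
    ∑ v, G.degree v ^ 2 ≤ Fintype.card V * (Fintype.card V - 1) + ∑ v, G.degree v := by
  calc ∑ v, G.degree v ^ 2 = ∑ v, ∑ w ∈ G.neighborFinset v, G.degree w :=
        sum_sq_degree_eq_sum_sum_degree_neighborFinset
    _ ≤ ∑ v, (G.degree v + (Fintype.card V - 1)) :=
        sum_le_sum fun v _ => sum_degree_neighborFinset_le hG v
    _ = Fintype.card V * (Fintype.card V - 1) + ∑ v, G.degree v := by
        rw [sum_add_distrib, sum_const, card_univ, smul_eq_mul, add_comm]

theorem degree_le_card_sub_degree_add_one {u v : V} (hvu : v ≠ u) :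
    G.degree v ≤ Fintype.card V - G.degree u + 1 := by
  rw [← card_neighborFinset_eq_degree, ← card_neighborFinset_eq_degree,
    ← card_sdiff_add_card_inter _ (G.neighborFinset u), ← card_univ,
    ← card_sdiff_of_subset (subset_univ _)]
  exact add_le_add (card_le_card (sdiff_subset_sdiff (subset_univ _) le_rfl))
    (card_neighborFinset_inter_le_one hG hvu)

theorem sum_erase_sq_degree_le (u : V) :
    ∑ v ∈ univ.erase u, G.degree v ^ 2 ≤
      2 * (Fintype.card V - 1) * (Fintype.card V + 1 - G.degree u) := by
  have hsub : G.neighborFinset u ⊆ univ.erase u := fun w hw =>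
    mem_erase.mpr ⟨(G.ne_of_adj ((mem_neighborFinset _ _ _).mp hw)).symm, mem_univ w⟩
  have hcard : #(univ.erase u \ G.neighborFinset u) = Fintype.card V - 1 - G.degree u := by
    rw [card_sdiff_of_subset hsub, card_erase_of_mem (mem_univ u), card_univ,
      card_neighborFinset_eq_degree]
  have hnonadj : ∑ v ∈ univ.erase u \ G.neighborFinset u, G.degree v ≤
      (Fintype.card V - 1 - G.degree u) * (Fintype.card V - G.degree u + 1) := by
    rw [← hcard, ← smul_eq_mul]
    exact sum_le_card_nsmul _ _ _ fun v hv =>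
      degree_le_card_sub_degree_add_one hG (ne_of_mem_erase (mem_sdiff.mp hv).1)
  have hsum : ∑ v ∈ univ.erase u, G.degree v ≤ G.degree u + (Fintype.card V - 1) +
      (Fintype.card V - 1 - G.degree u) * (Fintype.card V - G.degree u + 1) := by
    rw [← sum_sdiff hsub, add_comm]
    exact add_le_add (sum_degree_neighborFinset_le hG u) hnonadj
  have hsq := sum_sq_degree_le hG
  rw [← add_sum_erase _ (fun v => G.degree v ^ 2) (mem_univ u),
    ← add_sum_erase _ (fun v => G.degree v) (mem_univ u)] at hsq
  obtain ⟨t, ht⟩ : ∃ t, Fintype.card V = G.degree u + t + 1 :=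
    ⟨Fintype.card V - 1 - G.degree u, by have := G.degree_lt_card_verts u; omega⟩
  rw [ht] at hsq hsum ⊢
  simp only [Nat.add_sub_cancel, Nat.add_sub_cancel_left,
    show G.degree u + t + 1 - G.degree u + 1 = t + 2 by omega,
    show G.degree u + t + 1 + 1 - G.degree u = t + 2 by omega] at hsq hsum ⊢
  nlinarith

theorem sum_degree_pow_lt_of_two_mul_maxDegree_le (hn : 5 ≤ Fintype.card V) {r : ℕ}
    (hr : 3 ≤ r) (hD : 2 * G.maxDegree ≤ Fintype.card V - 1) :
    ∑ v, G.degree v ^ r < (Fintype.card V - 1) ^ r := by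
  obtain ⟨m, hm⟩ : ∃ m, Fintype.card V = m + 1 := ⟨Fintype.card V - 1, by omega⟩
  rw [hm, Nat.add_sub_cancel] at hD ⊢
  have hsum : ∑ v, G.degree v ≤ (m + 1) * G.maxDegree := by
    simpa [hm] using sum_le_card_nsmul univ (fun v => G.degree v) _
      fun v _ => G.degree_le_maxDegree v
  calc ∑ v, G.degree v ^ r ≤ G.maxDegree ^ (r - 2) * ∑ v, G.degree v ^ 2 :=
        sum_pow_le_pow_sub_two_mul_sum_sq _ _ (by omega) fun v _ => G.degree_le_maxDegree v
    _ ≤ G.maxDegree ^ (r - 2) * ((m + 1) * m + (m + 1) * G.maxDegree) := by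
        gcongr
        calc ∑ v, G.degree v ^ 2 ≤ (m + 1) * m + ∑ v, G.degree v := by
              simpa [hm] using sum_sq_degree_le hG
          _ ≤ (m + 1) * m + (m + 1) * G.maxDegree := by gcongr
    _ < m ^ r := pow_sub_two_mul_lt_pow (by omega) hD hr

theorem sum_degree_pow_lt_of_lt_two_mul_maxDegree (hn : 14 ≤ Fintype.card V) {r : ℕ}
    (hr : 3 ≤ r) (hD : Fintype.card V - 1 < 2 * G.maxDegree)
    (hDn : G.maxDegree < Fintype.card V - 1) :
    ∑ v, G.degree v ^ r < (Fintype.card V - 1) ^ r := by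
  have : Nonempty V := Fintype.card_pos_iff.mp (by omega)
  obtain ⟨u, hu⟩ := G.exists_maximal_degree_vertex
  obtain ⟨t, ht⟩ : ∃ t, Fintype.card V = G.maxDegree + t + 1 :=
    ⟨Fintype.card V - 1 - G.maxDegree, by omega⟩
  have hdeg : ∀ v ∈ univ.erase u, G.degree v ≤ t + 2 := fun v hv => by
    have := degree_le_card_sub_degree_add_one hG (ne_of_mem_erase hv)
    omega
  have hsq := sum_erase_sq_degree_le hG u
  rw [ht, ← hu, show G.maxDegree + t + 1 + 1 - G.maxDegree = t + 2 by omega,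
    Nat.add_sub_cancel] at hsq
  rw [ht, Nat.add_sub_cancel]
  calc ∑ v, G.degree v ^ r = G.maxDegree ^ r + ∑ v ∈ univ.erase u, G.degree v ^ r := by
        rw [hu, add_sum_erase _ (fun v => G.degree v ^ r) (mem_univ u)]
    _ ≤ G.maxDegree ^ r + (t + 2) ^ (r - 2) * ∑ v ∈ univ.erase u, G.degree v ^ 2 := by
        gcongr
        exact sum_pow_le_pow_sub_two_mul_sum_sq _ _ (by omega) hdeg
    _ ≤ G.maxDegree ^ r + (t + 2) ^ (r - 2) * (2 * (G.maxDegree + t) * (t + 2)) := by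
        gcongr
    _ < (G.maxDegree + t) ^ r := pow_add_pow_sub_two_mul_lt_pow (by omega) (by omega) (by omega) hr

theorem sum_degree_pow_lt_of_forall_not_isUniversal (hn : 14 ≤ Fintype.card V) {r : ℕ}
    (hr : 3 ≤ r) (hnu : ∀ v, ¬ G.IsUniversal v) :
    ∑ v, G.degree v ^ r < (Fintype.card V - 1) ^ r := by
  have : Nonempty V := Fintype.card_pos_iff.mp (by omega)
  obtain ⟨u, hu⟩ := G.exists_maximal_degree_vertex
  have hDn : G.maxDegree < Fintype.card V - 1 := hu ▸ (G.degree_lt_card_sub_one u).mpr (hnu u)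
  rcases le_or_gt (2 * G.maxDegree) (Fintype.card V - 1) with hsmall | hlarge
  · exact sum_degree_pow_lt_of_two_mul_maxDegree_le hG (by omega) hr hsmall
  · exact sum_degree_pow_lt_of_lt_two_mul_maxDegree hG hn hr hlarge hDn

theorem degree_le_two_of_isUniversal {u v : V} (hu : G.IsUniversal u) (hvu : v ≠ u) :
    G.degree v ≤ 2 := by
  have h := degree_le_card_sub_degree_add_one hG hvu
  rw [(G.degree_eq_card_sub_one u).mpr hu] at h
  have := Fintype.card_pos_iff.mpr ⟨u⟩
  omega

theorem sum_degree_le_of_isUniversal {u : V} (hu : G.IsUniversal u) :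
    ∑ v, G.degree v ≤ 3 * (Fintype.card V - 1) := by
  rw [← add_sum_erase _ _ (mem_univ u), (G.degree_eq_card_sub_one u).mpr hu]
  have := sum_le_card_nsmul (univ.erase u) (fun v => G.degree v) 2
    fun v hv => degree_le_two_of_isUniversal hG hu (ne_of_mem_erase hv)
  rw [card_erase_of_mem (mem_univ u), card_univ, smul_eq_mul] at this
  omega

theorem sum_degree_pow_of_isUniversal {u : V} (hu : G.IsUniversal u) (r : ℕ) :
    ∑ v, G.degree v ^ r = (Fintype.card V - 1) ^ r + (Fintype.card V - 1) +
      (2 ^ r - 1) * (∑ v, G.degree v - 2 * (Fintype.card V - 1)) := by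
  have hdeg : ∀ v ∈ univ.erase u, 1 ≤ G.degree v ∧ G.degree v ≤ 2 := fun v hv =>
    ⟨G.degree_pos_iff_exists_adj v |>.mpr ⟨u, (hu (ne_of_mem_erase hv).symm).symm⟩,
      degree_le_two_of_isUniversal hG hu (ne_of_mem_erase hv)⟩
  have hpow : ∀ v ∈ univ.erase u, G.degree v ^ r = 1 + (2 ^ r - 1) * (G.degree v - 1) :=
    fun v hv => by
      obtain ⟨h1, h2⟩ := hdeg v hv
      interval_cases G.degree v <;> simp [Nat.one_le_two_pow]
  have hsum : ∑ v ∈ univ.erase u, G.degree v =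
      (Fintype.card V - 1) + ∑ v ∈ univ.erase u, (G.degree v - 1) := by
    rw [← card_univ, ← card_erase_of_mem (mem_univ u), card_eq_sum_ones, ← sum_add_distrib]
    exact sum_congr rfl fun v hv => by have := (hdeg v hv).1; omega
  rw [← add_sum_erase _ (fun v => G.degree v ^ r) (mem_univ u),
    ← add_sum_erase _ (fun v => G.degree v) (mem_univ u), sum_congr rfl hpow, sum_add_distrib,
    ← mul_sum, hsum, (G.degree_eq_card_sub_one u).mpr hu]
  simp only [sum_const, card_erase_of_mem (mem_univ u), card_univ, smul_eq_mul, mul_one]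
  rw [show ∀ a b : ℕ, a + (a + b) - 2 * a = b from fun a b => by omega]
  ring

end CycleFour

end SimpleGraph

theorem degPow_eq_sum_degree_pow {V : Type*} [Fintype V] (G : SimpleGraph V)
    [DecidableRel G.Adj] (r : ℕ) : degPow G r = ∑ v, G.degree v ^ r := by
  refine sum_congr rfl fun v _ => ?_
  rw [← card_neighborFinset_eq_degree, neighborFinset_def, Set.ncard_eq_toFinset_card']

section Friendship

variable {n : ℕ}

theorem friendshipGraph_adj {v w : Fin n} :
    (friendshipGraph n).Adj v w ↔ v.val ≠ w.val ∧ (v.val = 0 ∨ w.val = 0 ∨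
      (v.val % 2 = 1 ∧ w.val = v.val + 1) ∨ (w.val % 2 = 1 ∧ v.val = w.val + 1)) := by
  change v ≠ w ∧ _ ↔ _
  rw [Ne, Fin.ext_iff]
  tauto

theorem friendshipGraph_cycleGraph_four_free :
    ¬ Contains (cycleGraph 4) (friendshipGraph n) := by
  rw [contains_cycleGraph_four_iff]
  rintro ⟨x, y, z, w, hxy, hzw, hxz, hxw, hyz, hyw⟩
  rw [friendshipGraph_adj] at hxz hxw hyz hyw
  rw [Ne, Fin.ext_iff] at hxy hzw
  omega

theorem friendshipGraph_isUniversal_zero (hn : 0 < n) :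
    (friendshipGraph n).IsUniversal ⟨0, hn⟩ := fun w hw => by
  rw [friendshipGraph_adj]
  exact ⟨Fin.val_ne_of_ne hw, Or.inl rfl⟩

variable [DecidableRel (friendshipGraph n).Adj]

theorem two_le_degree_friendshipGraph {v : Fin n} (h0 : v.val ≠ 0) (hlast : v.val + 1 ≠ n) :
    2 ≤ (friendshipGraph n).degree v := by
  rw [← card_neighborFinset_eq_degree, Nat.succ_le_iff, one_lt_card]
  refine ⟨⟨0, v.pos⟩, ?_,
    ⟨if v.val % 2 = 1 then v.val + 1 else v.val - 1, by split_ifs <;> omega⟩, ?_, ?_⟩ <;>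
  simp only [mem_neighborFinset, friendshipGraph_adj, ne_eq, Fin.ext_iff] <;> grind

theorem three_mul_le_sum_degree_friendshipGraph :
    3 * (n - 1) ≤ ∑ v, (friendshipGraph n).degree v + 1 := by
  rcases Nat.lt_or_ge n 2 with hn | hn
  · omega
  have hz := friendshipGraph_isUniversal_zero (n := n) (by omega)
  set z : Fin n := ⟨0, by omega⟩
  set l : Fin n := ⟨n - 1, by omega⟩
  have hl : l ∈ univ.erase z := mem_erase.mpr ⟨by simp [z, l, Fin.ext_iff]; omega, mem_univ l⟩
  have hdl : 1 ≤ (friendshipGraph n).degree l :=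
    (degree_pos_iff_exists_adj _ _).mpr ⟨z, (hz (ne_of_mem_erase hl).symm).symm⟩
  have hrest := card_nsmul_le_sum ((univ.erase z).erase l)
    (fun v => (friendshipGraph n).degree v) 2 fun v hv =>
      two_le_degree_friendshipGraph (Fin.val_ne_of_ne (ne_of_mem_erase (mem_of_mem_erase hv)))
        (fun h => ne_of_mem_erase hv (Fin.ext (by simp [l]; omega)))
  rw [card_erase_of_mem hl, card_erase_of_mem (mem_univ z), card_univ, Fintype.card_fin,
    smul_eq_mul] at hrest
  rw [← add_sum_erase _ _ (mem_univ z), ← add_sum_erase _ _ hl,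
    (degree_eq_card_sub_one _ _).mpr hz, Fintype.card_fin]
  omega

end Friendship

theorem degPow_le_degPow_friendshipGraph_of_isUniversal {n r : ℕ} {G : SimpleGraph (Fin n)}
    (hG : ¬ Contains (cycleGraph 4) G) {u : Fin n} (hu : G.IsUniversal u) :
    degPow G r ≤ degPow (friendshipGraph n) r := by
  classical
  have hF := friendshipGraph_isUniversal_zero u.pos
  rw [degPow_eq_sum_degree_pow, degPow_eq_sum_degree_pow, sum_degree_pow_of_isUniversal hG hu,
    sum_degree_pow_of_isUniversal friendshipGraph_cycleGraph_four_free hF, Fintype.card_fin]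
  refine Nat.add_le_add_left (Nat.mul_le_mul_left _ (Nat.sub_le_sub_right ?_ _)) _
  have hGe := G.sum_degrees_eq_twice_card_edges
  have hFe := (friendshipGraph n).sum_degrees_eq_twice_card_edges
  have hGle := sum_degree_le_of_isUniversal hG hu
  have hFge := three_mul_le_sum_degree_friendshipGraph (n := n)
  rw [Fintype.card_fin] at hGle
  omega

theorem degPow_le_degPow_friendshipGraph {n r : ℕ} (hn : 14 ≤ n) (hr : 3 ≤ r)
    {G : SimpleGraph (Fin n)} (hG : ¬ Contains (cycleGraph 4) G) :
    degPow G r ≤ degPow (friendshipGraph n) r := by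
  classical
  by_cases hu : ∃ u, G.IsUniversal u
  · obtain ⟨u, hu⟩ := hu
    exact degPow_le_degPow_friendshipGraph_of_isUniversal hG hu
  rw [not_exists] at hu
  have hn0 : 0 < n := by omega
  rw [degPow_eq_sum_degree_pow, degPow_eq_sum_degree_pow]
  apply le_of_lt
  calc ∑ v, G.degree v ^ r < (n - 1) ^ r := by
        simpa using sum_degree_pow_lt_of_forall_not_isUniversal hG (by simpa) hr hu
    _ = (friendshipGraph n).degree ⟨0, hn0⟩ ^ r := by
        rw [(degree_eq_card_sub_one _ _).mpr (friendshipGraph_isUniversal_zero hn0),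
          Fintype.card_fin]
    _ ≤ ∑ v, (friendshipGraph n).degree v ^ r :=
        single_le_sum (f := fun v => (friendshipGraph n).degree v ^ r) (fun v _ => Nat.zero_le _)
          (mem_univ _)

/-- For `r ≥ 3` and all sufficiently large `n`,
`ex_r(n, C_4) = e_r(F_n)`. -/
theorem stmt_7 (r : ℕ) (hr : 3 ≤ r) :
    ∃ n₀ : ℕ, ∀ n ≥ n₀,
      exDegPow n r (SimpleGraph.cycleGraph 4) = degPow (friendshipGraph n) r := by
  refine ⟨14, fun n hn => IsGreatest.csSup_eq ⟨?_, ?_⟩⟩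
  · exact ⟨friendshipGraph n, friendshipGraph_cycleGraph_four_free, rfl⟩
  · rintro _ ⟨G, hG, rfl⟩
    exact degPow_le_degPow_friendshipGraph hn hr hG
end
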